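/- arXiv:2404.18976 — 3 statements merged into one kernel-verified Lean document; each statement's English description precedes it below -/
import Mathlib

section
/- Suppose the optimal critic in the InfoNCE objective takes the form f*(x1,x2) = log p(x1|x2) + c(x1) for some function c depending only on x1. Then the plug-in estimator I_NCE-CLUB(X1;X2) = E_{p(x1,x2)}[f*(x1,x2)] − E_{p(x1)p(x2)}[f*(x1,x2)] equals E_{p(x1,x2)}[log p(x1|x2)] − E_{p(x1)p(x2)}[log p(x1|x2)], and this quantity is an upper bound on the mutual information I(X1;X2). -/
open scoped BigOperators

/-- Shannon entropy in bits of a pmf on a finite type. -/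
noncomputable def H2 {α : Type*} [Fintype α] (p : α → ℝ) : ℝ :=
  -∑ a, p a * Real.logb 2 (p a)

/-- Mutual information I(A;B) in bits for a joint pmf on `α × β`. -/
noncomputable def MI2 {α β : Type*} [Fintype α] [Fintype β] (p : α × β → ℝ) : ℝ :=
  ∑ a, ∑ b, p (a, b) *
    Real.logb 2 (p (a, b) / ((∑ b', p (a, b')) * (∑ a', p (a', b))))

/-- Conditional mutual information I(A;B|C) in bits for a joint pmf on `α × β × γ`
(conditioning on the third coordinate). -/
noncomputable def CMI {α β γ : Type*} [Fintype α] [Fintype β] [Fintype γ]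
    (p : α × β × γ → ℝ) : ℝ :=
  ∑ a, ∑ b, ∑ c, p (a, b, c) *
    Real.logb 2 ((∑ a', ∑ b', p (a', b', c)) * p (a, b, c) /
      ((∑ b', p (a, b', c)) * (∑ a', p (a', b, c))))

/-- `p` is a probability mass function. -/
def IsDist {α : Type*} [Fintype α] (p : α → ℝ) : Prop :=
  (∀ a, 0 ≤ p a) ∧ ∑ a, p a = 1

section
variable {X1 X2 Y : Type*} [Fintype X1] [Fintype X2] [Fintype Y]

/-- Marginal pmf of (X1, Y). -/
noncomputable def margXY1 (p : X1 × X2 × Y → ℝ) : X1 × Y → ℝ :=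
  fun z => ∑ x2, p (z.1, x2, z.2)

/-- Marginal pmf of (X2, Y). -/
noncomputable def margXY2 (p : X1 × X2 × Y → ℝ) : X2 × Y → ℝ :=
  fun z => ∑ x1, p (x1, z.1, z.2)

/-- Marginal pmf of (X1, X2). -/
noncomputable def marg12 (p : X1 × X2 × Y → ℝ) : X1 × X2 → ℝ :=
  fun z => ∑ y, p (z.1, z.2, y)

/-- Marginal pmf of Y. -/
noncomputable def margY (p : X1 × X2 × Y → ℝ) : Y → ℝ :=
  fun y => ∑ x1, ∑ x2, p (x1, x2, y)

/-- Total multimodal information I((X1,X2); Y), treating (X1,X2) as one variable. -/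
noncomputable def miJointY (p : X1 × X2 × Y → ℝ) : ℝ :=
  MI2 (fun z : (X1 × X2) × Y => p (z.1.1, z.1.2, z.2))

/-- I(X1;X2|Y). -/
noncomputable def cmi12GivenY (p : X1 × X2 × Y → ℝ) : ℝ := CMI p

/-- I(X1;Y|X2). -/
noncomputable def cmi1YGiven2 (p : X1 × X2 × Y → ℝ) : ℝ :=
  CMI (fun z : X1 × Y × X2 => p (z.1, z.2.2, z.2.1))

/-- I(X2;Y|X1). -/
noncomputable def cmi2YGiven1 (p : X1 × X2 × Y → ℝ) : ℝ :=
  CMI (fun z : X2 × Y × X1 => p (z.2.2, z.1, z.2.1))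

/-- Interaction information I(X1;X2;Y) = I(X1;X2) − I(X1;X2|Y). -/
noncomputable def interactionInfo (p : X1 × X2 × Y → ℝ) : ℝ :=
  MI2 (marg12 p) - cmi12GivenY p

/-- Δ_p: joint distributions matching both unimodal-label marginals of `p`. -/
def DeltaP (p : X1 × X2 × Y → ℝ) : Set (X1 × X2 × Y → ℝ) :=
  {q | IsDist q ∧ margXY1 q = margXY1 p ∧ margXY2 q = margXY2 p}

/-- Δ_{p,1,2,12}: additionally matching the (X1,X2) marginal of `p`. -/
def DeltaP12 (p : X1 × X2 × Y → ℝ) : Set (X1 × X2 × Y → ℝ) :=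
  {q | IsDist q ∧ margXY1 q = margXY1 p ∧ margXY2 q = margXY2 p ∧ marg12 q = marg12 p}

/-- PID redundancy R = max_{q ∈ Δ_p} I_q(X1;X2;Y). -/
noncomputable def Redundancy (p : X1 × X2 × Y → ℝ) : ℝ :=
  sSup ((fun q => interactionInfo q) '' DeltaP p)

/-- PID uniqueness U1 = min_{q ∈ Δ_p} I_q(X1;Y|X2). -/
noncomputable def Unique1 (p : X1 × X2 × Y → ℝ) : ℝ :=
  sInf ((fun q => cmi1YGiven2 q) '' DeltaP p)

/-- PID uniqueness U2 = min_{q ∈ Δ_p} I_q(X2;Y|X1). -/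
noncomputable def Unique2 (p : X1 × X2 × Y → ℝ) : ℝ :=
  sInf ((fun q => cmi2YGiven1 q) '' DeltaP p)

/-- PID synergy S = I_p(X1,X2;Y) − min_{q ∈ Δ_p} I_q(X1,X2;Y). -/
noncomputable def Synergy (p : X1 × X2 × Y → ℝ) : ℝ :=
  miJointY p - sInf ((fun q => miJointY q) '' DeltaP p)

end

/-- Gibbs inequality: nonnegativity of KL divergence (natural log). -/
lemma gibbs_ineq {A : Type*} [Fintype A] (q r : A → ℝ) (hq : ∀ a, 0 < q a)
    (hr : ∀ a, 0 < r a) (hq1 : ∑ a, q a = 1) (hr1 : ∑ a, r a = 1) :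
    0 ≤ ∑ a, q a * Real.log (q a / r a) := by
  have h : ∑ a, q a * Real.log (r a / q a) ≤ 0 := by
    have hle : ∑ a, q a * Real.log (r a / q a) ≤ ∑ a, (r a - q a) := by
      apply Finset.sum_le_sum
      intro a _
      have h1 : Real.log (r a / q a) ≤ r a / q a - 1 :=
        Real.log_le_sub_one_of_pos (div_pos (hr a) (hq a))
      calc q a * Real.log (r a / q a) ≤ q a * (r a / q a - 1) :=
            mul_le_mul_of_nonneg_left h1 (hq a).le
        _ = r a - q a := by
            rw [mul_sub, mul_one, mul_div_cancel₀ _ (hq a).ne']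
    have h0 : ∑ a, (r a - q a) = 0 := by
      rw [Finset.sum_sub_distrib, hr1, hq1]; ring
    linarith
  have heq : ∑ a, q a * Real.log (q a / r a) = -∑ a, q a * Real.log (r a / q a) := by
    rw [← Finset.sum_neg_distrib]
    refine Finset.sum_congr rfl fun a _ => ?_
    rw [show Real.log (q a / r a) = -Real.log (r a / q a) from by
      rw [← Real.log_inv, inv_div]]
    ring
  linarith [heq]

/-- with optimal critic f*(x1,x2) = log p(x1|x2) + c(x1), the
NCE-CLUB plug-in estimator equals E_p[log p(x1|x2)] − E_{p(x1)p(x2)}[log p(x1|x2)],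
and this quantity upper-bounds I(X1;X2). -/
theorem nce_club_upper_bound {X1 X2 : Type*} [Fintype X1] [Fintype X2]
    (p : X1 × X2 → ℝ) (hp0 : ∀ z, 0 < p z) (hp1 : ∑ z, p z = 1)
    (c : X1 → ℝ) (fstar : X1 × X2 → ℝ)
    (hf : ∀ z, fstar z = Real.logb 2 (p z / ∑ a', p (a', z.2)) + c z.1) :
    ((∑ z, p z * fstar z) -
        (∑ a, ∑ b, (∑ b', p (a, b')) * (∑ a', p (a', b)) * fstar (a, b)) =
      (∑ z, p z * Real.logb 2 (p z / ∑ a', p (a', z.2))) -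
        (∑ a, ∑ b, (∑ b', p (a, b')) * (∑ a', p (a', b)) *
          Real.logb 2 (p (a, b) / ∑ a', p (a', b)))) ∧
    MI2 p ≤
      (∑ z, p z * Real.logb 2 (p z / ∑ a', p (a', z.2))) -
        (∑ a, ∑ b, (∑ b', p (a, b')) * (∑ a', p (a', b)) *
          Real.logb 2 (p (a, b) / ∑ a', p (a', b))) := by
    classical
  have hne : Nonempty (X1 × X2) := by
    by_contra h
    rw [not_nonempty_iff] at h
    simp at hp1
  have hne1 : Nonempty X1 := ⟨hne.some.1⟩
  have hne2 : Nonempty X2 := ⟨hne.some.2⟩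
  set L := Real.log 2 with hLdef
  have hL : 0 < L := Real.log_pos (by norm_num)
  have hm1 : ∀ a : X1, 0 < ∑ b', p (a, b') :=
    fun a => Finset.sum_pos (fun b _ => hp0 _) Finset.univ_nonempty
  have hm2 : ∀ b : X2, 0 < ∑ a', p (a', b) :=
    fun b => Finset.sum_pos (fun a _ => hp0 _) Finset.univ_nonempty
  have hp1' : ∑ a, ∑ b, p (a, b) = 1 := by rw [← Fintype.sum_prod_type]; exact hp1
  have hsum1 : ∑ a : X1, ∑ b', p (a, b') = 1 := hp1'
  have hsum2 : ∑ b : X2, ∑ a', p (a', b) = 1 := by rw [Finset.sum_comm]; exact hp1'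
  set S1 : ℝ := ∑ a, ∑ b, p (a, b) * Real.log (p (a, b)) with hS1
  set T1 : ℝ := ∑ a : X1, (∑ b', p (a, b')) * Real.log (∑ b', p (a, b')) with hT1
  set T2 : ℝ := ∑ b : X2, (∑ a', p (a', b)) * Real.log (∑ a', p (a', b)) with hT2
  set U : ℝ := ∑ a, ∑ b, (∑ b', p (a, b')) * (∑ a', p (a', b)) * Real.log (p (a, b)) with hU
  have hA : (∑ z, p z * Real.logb 2 (p z / ∑ a', p (a', z.2))) = (S1 - T2) / L := by
    rw [Fintype.sum_prod_type]
    have key : ∀ a b, p (a, b) * Real.logb 2 (p (a, b) / ∑ a', p (a', b))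
        = (p (a, b) * Real.log (p (a, b)) - p (a, b) * Real.log (∑ a', p (a', b))) / L := by
      intro a b
      rw [Real.logb, Real.log_div (hp0 _).ne' (hm2 b).ne']
      ring
    simp only [key]
    simp only [← Finset.sum_div]
    congr 1
    simp only [Finset.sum_sub_distrib]
    rw [hS1]
    congr 1
    rw [Finset.sum_comm, hT2]
    exact Finset.sum_congr rfl fun b _ => (Finset.sum_mul _ _ _).symm
  have hB : (∑ a, ∑ b, (∑ b', p (a, b')) * (∑ a', p (a', b)) *
        Real.logb 2 (p (a, b) / ∑ a', p (a', b))) = (U - T2) / L := by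
    have key : ∀ a b, (∑ b', p (a, b')) * (∑ a', p (a', b)) *
          Real.logb 2 (p (a, b) / ∑ a', p (a', b))
        = ((∑ b', p (a, b')) * (∑ a', p (a', b)) * Real.log (p (a, b))
            - (∑ b', p (a, b')) * ((∑ a', p (a', b)) * Real.log (∑ a', p (a', b)))) / L := by
      intro a b
      rw [Real.logb, Real.log_div (hp0 _).ne' (hm2 b).ne']
      ring
    simp only [key]
    simp only [← Finset.sum_div]
    congr 1
    simp only [Finset.sum_sub_distrib]
    rw [hU]
    congr 1
    rw [show (∑ a : X1, ∑ b, (∑ b', p (a, b')) * ((∑ a', p (a', b)) * Real.log (∑ a', p (a', b))))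
        = ∑ a : X1, (∑ b', p (a, b')) * T2 from
      Finset.sum_congr rfl fun a _ => by rw [hT2, Finset.mul_sum]]
    rw [← Finset.sum_mul, hsum1, one_mul]
  have hMI : MI2 p = (S1 - T1 - T2) / L := by
    rw [MI2]
    have key : ∀ (a : X1) (b : X2), p (a, b) *
          Real.logb 2 (p (a, b) / ((∑ b', p (a, b')) * (∑ a', p (a', b))))
        = (p (a, b) * Real.log (p (a, b)) - p (a, b) * Real.log (∑ b', p (a, b'))
            - p (a, b) * Real.log (∑ a', p (a', b))) / L := by
      intro a b
      rw [Real.logb, Real.log_div (hp0 _).ne' (mul_pos (hm1 a) (hm2 b)).ne',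
        Real.log_mul (hm1 a).ne' (hm2 b).ne']
      ring
    simp only [key]
    simp only [← Finset.sum_div]
    congr 1
    simp only [Finset.sum_sub_distrib]
    rw [hS1]
    congr 1
    · congr 1
      rw [hT1]
      exact Finset.sum_congr rfl fun a _ => (Finset.sum_mul _ _ _).symm
    · rw [Finset.sum_comm, hT2]
      exact Finset.sum_congr rfl fun b _ => (Finset.sum_mul _ _ _).symm
  have hK : 0 ≤ T1 + T2 - U := by
    have hg := gibbs_ineq (fun z : X1 × X2 => (∑ b', p (z.1, b')) * (∑ a', p (a', z.2))) p
      (fun z => mul_pos (hm1 z.1) (hm2 z.2)) hp0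
      (by
        rw [Fintype.sum_prod_type]
        calc (∑ a, ∑ b, (∑ b', p (a, b')) * (∑ a', p (a', b)))
            = ∑ a : X1, (∑ b', p (a, b')) * ∑ b : X2, (∑ a', p (a', b)) :=
              Finset.sum_congr rfl fun a _ => (Finset.mul_sum _ _ _).symm
          _ = 1 := by rw [hsum2]; simpa using hsum1)
      hp1
    have heq : (∑ z : X1 × X2, (∑ b', p (z.1, b')) * (∑ a', p (a', z.2)) *
          Real.log ((∑ b', p (z.1, b')) * (∑ a', p (a', z.2)) / p z)) = T1 + T2 - U := by
      rw [Fintype.sum_prod_type]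
      have key : ∀ (a : X1) (b : X2), (∑ b', p (a, b')) * (∑ a', p (a', b)) *
            Real.log ((∑ b', p (a, b')) * (∑ a', p (a', b)) / p (a, b))
          = ((∑ b', p (a, b')) * Real.log (∑ b', p (a, b'))) * (∑ a', p (a', b))
            + (∑ b', p (a, b')) * ((∑ a', p (a', b)) * Real.log (∑ a', p (a', b)))
            - (∑ b', p (a, b')) * (∑ a', p (a', b)) * Real.log (p (a, b)) := by
        intro a b
        rw [Real.log_div (mul_pos (hm1 a) (hm2 b)).ne' (hp0 _).ne',
          Real.log_mul (hm1 a).ne' (hm2 b).ne']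
        ring
      simp only [key]
      simp only [Finset.sum_sub_distrib, Finset.sum_add_distrib]
      rw [hU, hT1, hT2]
      congr 2
      · calc (∑ a : X1, ∑ b, ((∑ b', p (a, b')) * Real.log (∑ b', p (a, b'))) * (∑ a', p (a', b)))
            = ∑ a : X1, ((∑ b', p (a, b')) * Real.log (∑ b', p (a, b'))) *
                ∑ b : X2, (∑ a', p (a', b)) :=
              Finset.sum_congr rfl fun a _ => (Finset.mul_sum _ _ _).symm
          _ = ∑ a : X1, (∑ b', p (a, b')) * Real.log (∑ b', p (a, b')) := by
              rw [hsum2]; simp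
      · calc (∑ a : X1, ∑ b, (∑ b', p (a, b')) * ((∑ a', p (a', b)) * Real.log (∑ a', p (a', b))))
            = ∑ a : X1, (∑ b', p (a, b')) *
                ∑ b : X2, (∑ a', p (a', b)) * Real.log (∑ a', p (a', b)) :=
              Finset.sum_congr rfl fun a _ => (Finset.mul_sum _ _ _).symm
          _ = (∑ a : X1, (∑ b', p (a, b'))) *
                ∑ b : X2, (∑ a', p (a', b)) * Real.log (∑ a', p (a', b)) :=
              (Finset.sum_mul _ _ _).symm
          _ = ∑ b : X2, (∑ a', p (a', b)) * Real.log (∑ a', p (a', b)) := by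
              rw [hsum1, one_mul]
    rw [heq] at hg
    exact hg
  constructor
  · simp only [hf, mul_add]
    simp only [Finset.sum_add_distrib]
    have e1 : (∑ z : X1 × X2, p z * c z.1)
        = ∑ a, ∑ b, (∑ b', p (a, b')) * (∑ a', p (a', b)) * c a := by
      rw [Fintype.sum_prod_type]
      refine Finset.sum_congr rfl fun a _ => ?_
      calc (∑ b, p (a, b) * c a) = (∑ b', p (a, b')) * c a := (Finset.sum_mul _ _ _).symm
        _ = ∑ b, (∑ b', p (a, b')) * (∑ a', p (a', b)) * c a := by
            rw [show (∑ b : X2, (∑ b', p (a, b')) * (∑ a', p (a', b)) * c a)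
                = ((∑ b', p (a, b')) * c a) * ∑ b : X2, (∑ a', p (a', b)) from by
              rw [Finset.mul_sum]; exact Finset.sum_congr rfl fun b _ => by ring]
            rw [hsum2, mul_one]
    rw [e1]
    ring
  · rw [hMI, hA, hB]
    rw [div_sub_div_same, div_le_div_iff₀ hL hL]
    nlinarith [hK, hL]
end

section
/- For any joint distribution p, the quantity E_{p(x1,x2)}[log p(x1|x2)] − E_{p(x1)p(x2)}[log p(x1|x2)] − I(X1;X2) equals the expected KL divergence E_{p(x2)}[KL(p(x1) ∥ p(x1|x2))] and is therefore nonnegative. -/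
open scoped BigOperators

lemma gibbs_aux {α : Type*} [Fintype α] (w q : α → ℝ) (hw : ∀ a, 0 < w a)
    (hq : ∀ a, 0 < q a) (hw1 : ∑ a, w a = 1) (hq1 : ∑ a, q a = 1) :
    0 ≤ ∑ a, w a * Real.logb 2 (w a / q a) := by
  have hlog2 : 0 < Real.log 2 := Real.log_pos one_lt_two
  have key : ∑ a, w a * Real.log (q a / w a) ≤ 0 := by
    calc ∑ a, w a * Real.log (q a / w a) ≤ ∑ a, w a * (q a / w a - 1) := by
          refine Finset.sum_le_sum fun a _ => ?_
          exact mul_le_mul_of_nonneg_left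
            (Real.log_le_sub_one_of_pos (div_pos (hq a) (hw a))) (hw a).le
      _ = ∑ a, (q a - w a) := by
          refine Finset.sum_congr rfl fun a _ => ?_
          rw [mul_sub, mul_div_cancel₀ _ (hw a).ne', mul_one]
      _ = 0 := by rw [Finset.sum_sub_distrib, hw1, hq1]; ring
  have hflip : ∑ a, w a * Real.log (w a / q a) = -∑ a, w a * Real.log (q a / w a) := by
    rw [← Finset.sum_neg_distrib]
    refine Finset.sum_congr rfl fun a _ => ?_
    rw [Real.log_div (hw a).ne' (hq a).ne', Real.log_div (hq a).ne' (hw a).ne']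
    ring
  have h0 : 0 ≤ ∑ a, w a * Real.log (w a / q a) := by rw [hflip]; linarith
  have : ∑ a, w a * Real.logb 2 (w a / q a)
      = (∑ a, w a * Real.log (w a / q a)) / Real.log 2 := by
    rw [Finset.sum_div]
    refine Finset.sum_congr rfl fun a _ => ?_
    rw [Real.logb, div_eq_mul_inv, div_eq_mul_inv]; ring
  rw [this]
  positivity


lemma club_identity_aux {X1 X2 : Type*} [Fintype X1] [Fintype X2]
    (p : X1 × X2 → ℝ) (p1 : X1 → ℝ) (p2 : X2 → ℝ)
    (hp0 : ∀ z, 0 < p z)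
    (h1pos : ∀ a, 0 < p1 a) (h2pos : ∀ b, 0 < p2 b)
    (hp1m : ∀ a, p1 a = ∑ b, p (a, b)) (hp2 : ∀ b, p2 b = ∑ a, p (a, b))
    (hs1 : ∑ a, p1 a = 1) (hs2 : ∑ b, p2 b = 1) :
    (∑ a, ∑ b, p (a, b) * Real.logb 2 (p (a, b) / p2 b))
      - (∑ a, ∑ b, p1 a * p2 b * Real.logb 2 (p (a, b) / p2 b))
      - (∑ a, ∑ b, p (a, b) * Real.logb 2 (p (a, b) / (p1 a * p2 b)))
      = ∑ b, p2 b * ∑ a, p1 a * Real.logb 2 (p1 a / (p (a, b) / p2 b)) := by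
  have hP : ∀ a b, (p (a, b)) ≠ 0 := fun a b => (hp0 _).ne'
  have h1 : ∀ a, p1 a ≠ 0 := fun a => (h1pos a).ne'
  have h2 : ∀ b, p2 b ≠ 0 := fun b => (h2pos b).ne'
  set T1 := ∑ a, ∑ b, p (a, b) * Real.logb 2 (p (a, b)) with hT1
  set T2 := ∑ a, p1 a * Real.logb 2 (p1 a) with hT2
  set T3 := ∑ b, p2 b * Real.logb 2 (p2 b) with hT3
  set U := ∑ a, ∑ b, p1 a * p2 b * Real.logb 2 (p (a, b)) with hU
  have hPL2 : ∑ a, ∑ b, p (a, b) * Real.logb 2 (p2 b) = T3 := by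
    rw [Finset.sum_comm, hT3]
    refine Finset.sum_congr rfl fun b _ => ?_
    rw [← Finset.sum_mul, ← hp2]
  have EA : (∑ a, ∑ b, p (a, b) * Real.logb 2 (p (a, b) / p2 b)) = T1 - T3 := by
    rw [hT1, ← hPL2, ← Finset.sum_sub_distrib]
    refine Finset.sum_congr rfl fun a _ => ?_
    rw [← Finset.sum_sub_distrib]
    refine Finset.sum_congr rfl fun b _ => ?_
    rw [Real.logb_div (hP a b) (h2 b), mul_sub]
  have EB : (∑ a, ∑ b, p1 a * p2 b * Real.logb 2 (p (a, b) / p2 b)) = U - T3 := by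
    have hmid : ∑ a, ∑ b, p1 a * p2 b * Real.logb 2 (p2 b) = T3 := by
      have : ∀ a, ∑ b, p1 a * p2 b * Real.logb 2 (p2 b) = p1 a * T3 := by
        intro a
        rw [hT3, Finset.mul_sum]
        exact Finset.sum_congr rfl fun b _ => by ring
      simp only [this]
      rw [← Finset.sum_mul, hs1, one_mul]
    rw [hU, ← hmid, ← Finset.sum_sub_distrib]
    refine Finset.sum_congr rfl fun a _ => ?_
    rw [← Finset.sum_sub_distrib]
    refine Finset.sum_congr rfl fun b _ => ?_
    rw [Real.logb_div (hP a b) (h2 b), mul_sub]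
  have hPL1 : ∑ a, ∑ b, p (a, b) * Real.logb 2 (p1 a) = T2 := by
    rw [hT2]
    refine Finset.sum_congr rfl fun a _ => ?_
    rw [← Finset.sum_mul, ← hp1m a]
  have EC : (∑ a, ∑ b, p (a, b) * Real.logb 2 (p (a, b) / (p1 a * p2 b)))
      = T1 - T2 - T3 := by
    rw [hT1, ← hPL1, ← hPL2, ← Finset.sum_sub_distrib, ← Finset.sum_sub_distrib]
    refine Finset.sum_congr rfl fun a _ => ?_
    rw [← Finset.sum_sub_distrib, ← Finset.sum_sub_distrib]
    refine Finset.sum_congr rfl fun b _ => ?_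
    rw [Real.logb_div (hP a b) (mul_ne_zero (h1 a) (h2 b)), Real.logb_mul (h1 a) (h2 b)]
    ring
  have ED : (∑ b, p2 b * ∑ a, p1 a * Real.logb 2 (p1 a / (p (a, b) / p2 b)))
      = T2 - U + T3 := by
    have inner : ∀ b, ∑ a, p1 a * Real.logb 2 (p1 a / (p (a, b) / p2 b))
        = T2 - (∑ a, p1 a * Real.logb 2 (p (a, b))) + Real.logb 2 (p2 b) := by
      intro b
      have : ∀ a, p1 a * Real.logb 2 (p1 a / (p (a, b) / p2 b))
          = p1 a * Real.logb 2 (p1 a) - p1 a * Real.logb 2 (p (a, b)) + p1 a * Real.logb 2 (p2 b) := by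
        intro a
        rw [Real.logb_div (h1 a) (div_ne_zero (hP a b) (h2 b)), Real.logb_div (hP a b) (h2 b)]
        ring
      simp only [this]
      rw [Finset.sum_add_distrib, Finset.sum_sub_distrib, ← Finset.sum_mul, hs1, one_mul, hT2]
    simp only [inner]
    have expand : ∀ b, p2 b * (T2 - (∑ a, p1 a * Real.logb 2 (p (a, b))) + Real.logb 2 (p2 b))
        = p2 b * T2 - (∑ a, p1 a * p2 b * Real.logb 2 (p (a, b))) + p2 b * Real.logb 2 (p2 b) := by
      intro b
      have h' : p2 b * ∑ a, p1 a * Real.logb 2 (p (a, b))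
          = ∑ a, p1 a * p2 b * Real.logb 2 (p (a, b)) := by
        rw [Finset.mul_sum]
        exact Finset.sum_congr rfl fun a _ => by ring
      rw [mul_add, mul_sub, h']
    simp only [expand]
    rw [Finset.sum_add_distrib, Finset.sum_sub_distrib, ← Finset.sum_mul, hs2, one_mul, ← hT3]
    congr 1
    rw [hU, Finset.sum_comm]
  rw [EA, EB, EC, ED]
  ring

/-- the CLUB gap equals the expected KL divergence
E_{p(x2)}[KL(p(x1) ‖ p(x1|x2))], hence is nonnegative. -/
theorem club_gap_is_expected_kl {X1 X2 : Type*} [Fintype X1] [Fintype X2]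
    (p : X1 × X2 → ℝ) (hp0 : ∀ z, 0 < p z) (hp1 : ∑ z, p z = 1) :
    ((∑ z, p z * Real.logb 2 (p z / ∑ a', p (a', z.2))) -
        (∑ a, ∑ b, (∑ b', p (a, b')) * (∑ a', p (a', b)) *
          Real.logb 2 (p (a, b) / ∑ a', p (a', b))) - MI2 p =
      ∑ b, (∑ a', p (a', b)) *
        (∑ a, (∑ b', p (a, b')) *
          Real.logb 2 ((∑ b', p (a, b')) / (p (a, b) / ∑ a', p (a', b))))) ∧
    0 ≤ (∑ z, p z * Real.logb 2 (p z / ∑ a', p (a', z.2))) -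
        (∑ a, ∑ b, (∑ b', p (a, b')) * (∑ a', p (a', b)) *
          Real.logb 2 (p (a, b) / ∑ a', p (a', b))) - MI2 p := by
  have hne1 : Nonempty X1 := by
    rcases isEmpty_or_nonempty X1 with h | h
    · simp at hp1
    · exact h
  have hne2 : Nonempty X2 := by
    rcases isEmpty_or_nonempty X2 with h | h
    · simp at hp1
    · exact h
  have h1pos : ∀ a : X1, 0 < ∑ b', p (a, b') :=
    fun a => Finset.sum_pos (fun b _ => hp0 _) Finset.univ_nonempty
  have h2pos : ∀ b : X2, 0 < ∑ a', p (a', b) :=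
    fun b => Finset.sum_pos (fun a _ => hp0 _) Finset.univ_nonempty
  have hsum : ∑ a, ∑ b, p (a, b) = 1 := by rw [← Fintype.sum_prod_type]; exact hp1
  have hs1 : ∑ a : X1, (∑ b', p (a, b')) = 1 := hsum
  have hs2 : ∑ b : X2, (∑ a', p (a', b)) = 1 := by rw [Finset.sum_comm]; exact hsum
  have hkey :
      (∑ a, ∑ b, p (a, b) * Real.logb 2 (p (a, b) / ∑ a', p (a', b)))
        - (∑ a, ∑ b, (∑ b', p (a, b')) * (∑ a', p (a', b)) *
            Real.logb 2 (p (a, b) / ∑ a', p (a', b)))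
        - (∑ a, ∑ b, p (a, b) *
            Real.logb 2 (p (a, b) / ((∑ b', p (a, b')) * (∑ a', p (a', b)))))
        = ∑ b, (∑ a', p (a', b)) *
            (∑ a, (∑ b', p (a, b')) *
              Real.logb 2 ((∑ b', p (a, b')) / (p (a, b) / ∑ a', p (a', b)))) :=
    club_identity_aux p (fun a => ∑ b', p (a, b')) (fun b => ∑ a', p (a', b))
      hp0 h1pos h2pos (fun a => rfl) (fun b => rfl) hs1 hs2
  have hfirst : (∑ z, p z * Real.logb 2 (p z / ∑ a', p (a', z.2)))
      = ∑ a, ∑ b, p (a, b) * Real.logb 2 (p (a, b) / ∑ a', p (a', b)) := by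
    rw [Fintype.sum_prod_type]
  have hMI : MI2 p = ∑ a, ∑ b, p (a, b) *
      Real.logb 2 (p (a, b) / ((∑ b', p (a, b')) * (∑ a', p (a', b)))) := rfl
  have hgoal1 := hkey
  rw [← hfirst, ← hMI] at hgoal1
  refine ⟨hgoal1, ?_⟩
  rw [hgoal1]
  refine Finset.sum_nonneg fun b _ => mul_nonneg (h2pos b).le ?_
  exact gibbs_aux (fun a => ∑ b', p (a, b')) (fun a => p (a, b) / ∑ a', p (a', b))
    h1pos (fun a => div_pos (hp0 _) (h2pos b)) hs1
    (by rw [← Finset.sum_div, div_self (h2pos b).ne'])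
end

section
/- Fano-type lower bound on accuracy: for discrete random variables (X1,X2) and label Y with finite label space, the Bayes-optimal classifier f* from (X1,X2) to Y satisfies P[f*(X1,X2) = Y] ≥ 2^{I(X1,X2;Y) − H(Y)}, where information and entropy are measured in bits. -/
open scoped BigOperators

lemma bayes_key {α β : Type*} [Fintype α] [Fintype β] (q : α × β → ℝ)
    (h0 : ∀ z, 0 ≤ q z) (h1 : ∑ z, q z = 1) (g : α → β)
    (hg : ∀ a b, q (a, b) ≤ q (a, g a)) :
    (2 : ℝ) ^ (MI2 q - H2 (fun b => ∑ a, q (a, b))) ≤ ∑ a, q (a, g a) := by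
  set A : α → ℝ := fun a => ∑ b, q (a, b) with hA
  have hA0 : ∀ a, 0 ≤ A a := fun a => Finset.sum_nonneg fun b _ => h0 _
  have hqA : ∀ a b, q (a, b) ≤ A a := fun a b =>
    Finset.single_le_sum (fun b _ => h0 (a, b)) (Finset.mem_univ b)
  have hB0 : ∀ b, (0:ℝ) ≤ ∑ a, q (a, b) := fun b => Finset.sum_nonneg fun a _ => h0 _
  have hqB : ∀ a b, q (a, b) ≤ ∑ a', q (a', b) := fun a b =>
    Finset.single_le_sum (fun a _ => h0 (a, b)) (Finset.mem_univ a)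
  -- Step 1: MI - H = ∑ q logb (q/A)
  have step1 : MI2 q - H2 (fun b => ∑ a, q (a, b)) =
      ∑ a, ∑ b, q (a, b) * Real.logb 2 (q (a, b) / A a) := by
    have hH : H2 (fun b => ∑ a, q (a, b)) =
        -∑ a, ∑ b, q (a, b) * Real.logb 2 (∑ a', q (a', b)) := by
      rw [H2, Finset.sum_comm]
      congr 1
      exact Finset.sum_congr rfl fun b _ => by rw [← Finset.sum_mul]
    rw [MI2, hH, sub_neg_eq_add, ← Finset.sum_add_distrib]
    refine Finset.sum_congr rfl fun a _ => ?_
    rw [← Finset.sum_add_distrib]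
    refine Finset.sum_congr rfl fun b _ => ?_
    rcases eq_or_lt_of_le (h0 (a, b)) with h | h
    · simp [← h]
    · have hApos : 0 < A a := lt_of_lt_of_le h (hqA a b)
      have hBpos : 0 < ∑ a', q (a', b) := lt_of_lt_of_le h (hqB a b)
      rw [← mul_add, div_mul_eq_div_div, Real.logb_div (by positivity) (by positivity),
        Real.logb_div h.ne' hApos.ne']
      ring_nf
  rw [step1]
  -- Step 2: AM-GM
  set r : α × β → ℝ := fun z => q z / A z.1 with hr
  have hr0 : ∀ z, 0 ≤ r z := fun z => div_nonneg (h0 z) (hA0 z.1)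
  have hsum : (∑ a, ∑ b, q (a, b) * Real.logb 2 (q (a, b) / A a)) =
      ∑ z : α × β, q z * Real.logb 2 (r z) := by
    rw [Fintype.sum_prod_type]
  rw [hsum]
  have step2 : (2:ℝ) ^ (∑ z : α × β, q z * Real.logb 2 (r z)) ≤ ∑ z : α × β, q z * r z := by
    calc (2:ℝ) ^ (∑ z : α × β, q z * Real.logb 2 (r z))
        = ∏ z : α × β, (2:ℝ) ^ (q z * Real.logb 2 (r z)) :=
          Real.rpow_sum_of_pos two_pos _ _
      _ = ∏ z : α × β, r z ^ q z := by
          refine Finset.prod_congr rfl fun z _ => ?_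
          rcases eq_or_lt_of_le (h0 z) with h | h
          · rcases eq_or_lt_of_le (hr0 z) with h' | h'
            · rw [← h, ← h', Real.rpow_zero, mul_comm, mul_zero, Real.rpow_zero]
            · rw [← h, zero_mul, Real.rpow_zero, Real.rpow_zero]
          · have hrpos : 0 < r z := by
              have : 0 < A z.1 := lt_of_lt_of_le h (by rw [hA]; exact hqA z.1 z.2)
              exact div_pos h this
            rw [mul_comm, Real.rpow_mul (by norm_num),
              Real.rpow_logb two_pos (by norm_num) hrpos]
      _ ≤ ∑ z : α × β, q z * r z :=
          Real.geom_mean_le_arith_mean_weighted _ _ _ (fun z _ => h0 z)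
            (by rw [h1]) (fun z _ => hr0 z)
  refine step2.trans ?_
  -- Step 3
  rw [Fintype.sum_prod_type]
  refine Finset.sum_le_sum fun a _ => ?_
  calc ∑ b, q (a, b) * r (a, b) ≤ ∑ b, q (a, b) * (q (a, g a) / A a) := by
        refine Finset.sum_le_sum fun b _ => ?_
        rcases eq_or_lt_of_le (hA0 a) with h | h
        · have hq0 : q (a, b) = 0 := le_antisymm (h ▸ hqA a b) (h0 _)
          simp [hq0]
        · refine mul_le_mul_of_nonneg_left ?_ (h0 _)
          show q (a, b) / A a ≤ q (a, g a) / A a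
          gcongr
          exact hg a b
      _ = A a * (q (a, g a) / A a) := by rw [← Finset.sum_mul]
      _ ≤ q (a, g a) := by
          rcases eq_or_lt_of_le (hA0 a) with h | h
          · rw [← h, zero_mul]; exact h0 _
          · rw [mul_div_cancel₀ _ h.ne']

/-- Fano-type lower bound: the Bayes-optimal classifier f* satisfies
P[f*(X1,X2) = Y] ≥ 2^{I(X1,X2;Y) − H(Y)} (in bits). -/
theorem bayes_accuracy_lower_bound {X1 X2 Y : Type*} [Fintype X1] [Fintype X2] [Fintype Y]
    (p : X1 × X2 × Y → ℝ) (hp : IsDist p)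
    (f : X1 × X2 → Y)
    (hf : ∀ x1 x2 y, p (x1, x2, y) ≤ p (x1, x2, f (x1, x2))) :
    (2 : ℝ) ^ (miJointY p - H2 (margY p)) ≤ ∑ x1, ∑ x2, p (x1, x2, f (x1, x2)) := by
  have key := bayes_key (fun z : (X1 × X2) × Y => p (z.1.1, z.1.2, z.2))
    (fun z => hp.1 _)
    (by simpa [Fintype.sum_prod_type] using hp.2)
    f (fun a b => hf a.1 a.2 b)
  have hmarg : margY p = fun y => ∑ a : X1 × X2, p (a.1, a.2, y) := by
    funext y
    simp [margY, Fintype.sum_prod_type]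
  have hgoal : (∑ x1, ∑ x2, p (x1, x2, f (x1, x2)))
      = ∑ a : X1 × X2, p (a.1, a.2, f a) := by
    rw [Fintype.sum_prod_type]
  rw [hgoal, hmarg]
  exact key
end
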